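/- Let H ≥ 1, let A₁, A₂ ∈ ℝ^{n×n} and B₁, B₂ ∈ ℝ^{n×m}. Then ‖G_u(A₁,B₁) − G_u(A₂,B₂)‖₂ ≤ ‖B₁‖₂ · ‖G_w(A₁)‖₂ · ‖G_w(A₂)‖₂ · ‖A₁ − A₂‖₂ + ‖G_w(A₂)‖₂ · ‖B₁ − B₂‖₂. -/

import Mathlib

open Matrix
open scoped Matrix.Norms.L2Operator

/-- The block lower-triangular Toeplitz matrix `G_w(A) ∈ ℝ^{Hn×Hn}` whose `(i,j)` block
(for `j ≤ i`) is `A^{i−j}` and whose blocks above the block diagonal are zero. -/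
def Gw {n : ℕ} (H : ℕ) (A : Matrix (Fin n) (Fin n) ℝ) :
    Matrix (Fin H × Fin n) (Fin H × Fin n) ℝ :=
  Matrix.of fun p q =>
    if (q.1 : ℕ) ≤ (p.1 : ℕ) then (A ^ ((p.1 : ℕ) - (q.1 : ℕ))) p.2 q.2 else 0

/-- The block lower-triangular Toeplitz matrix `G_u(A,B) ∈ ℝ^{Hn×Hm}` whose `(i,j)` block
(for `j ≤ i`) is `A^{i−j}B` and whose blocks above the block diagonal are zero. -/
def Gu {n m : ℕ} (H : ℕ) (A : Matrix (Fin n) (Fin n) ℝ) (B : Matrix (Fin n) (Fin m) ℝ) :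
    Matrix (Fin H × Fin n) (Fin H × Fin m) ℝ :=
  Matrix.of fun p q =>
    if (q.1 : ℕ) ≤ (p.1 : ℕ) then (A ^ ((p.1 : ℕ) - (q.1 : ℕ)) * B) p.2 q.2 else 0

/-!
With `S` the nilpotent down-shift on `Fin H` and `N = S ⊗ₖ A`, the block Toeplitz matrix `G_w(A)`
is the geometric sum `∑_{k<H} Nᵏ`, hence the two-sided inverse of `1 - N`, and
`G_u(A, B) = G_w(A) (1 ⊗ₖ B)`. The resolvent identity then gives
`G_w(A₁) - G_w(A₂) = G_w(A₁) (S ⊗ₖ (A₁ - A₂)) G_w(A₂)`, so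
`G_u(A₁, B₁) - G_u(A₂, B₂) = G_w(A₁) (S ⊗ₖ (A₁ - A₂)) G_w(A₂) (1 ⊗ₖ B₁) + G_w(A₂) (1 ⊗ₖ (B₁ - B₂))`,
and the bound follows from submultiplicativity once `‖1 ⊗ₖ C‖ ≤ ‖C‖` and `‖S ⊗ₖ C‖ ≤ ‖C‖`.
The latter holds because `S ⊗ₖ 1` is a partial isometry: `(S ⊗ₖ 1)ᴴ (S ⊗ₖ 1)` is a diagonal
`0/1` matrix.
-/

open scoped Kronecker

theorem Fin.sum_ite_val_eq {M : Type*} [AddCommMonoid M] {H : ℕ} (c : ℕ) (f : Fin H → M) :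
    ∑ l : Fin H, (if (l : ℕ) = c then f l else 0) = if h : c < H then f ⟨c, h⟩ else 0 := by
  split_ifs with h
  · rw [Fintype.sum_eq_single ⟨c, h⟩ fun l hl => if_neg fun hlc => hl (Fin.ext hlc)]
    simp
  · exact Finset.sum_eq_zero fun l _ => if_neg (by omega)

theorem sub_eq_mul_sub_mul_of_mul_eq_one {R : Type*} [Ring R] {a b u v : R} (ha : a * u = 1)
    (hb : v * b = 1) : a - b = a * (v - u) * b := by
  rw [mul_sub, sub_mul, mul_assoc, hb, mul_one, ha, one_mul]

namespace Matrix

variable {R 𝕜 : Type*} {ι α β γ : Type*}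

theorem kronecker_sub [NonUnitalNonAssocRing R] (A : Matrix ι α R) (B₁ B₂ : Matrix β γ R) :
    A ⊗ₖ (B₁ - B₂) = A ⊗ₖ B₁ - A ⊗ₖ B₂ := by
  ext
  simp [mul_sub]

theorem kronecker_pow [CommSemiring R] [Fintype α] [Fintype β] [DecidableEq α] [DecidableEq β]
    (A : Matrix α α R) (B : Matrix β β R) (k : ℕ) : (A ⊗ₖ B) ^ k = (A ^ k) ⊗ₖ (B ^ k) := by
  induction k with
  | zero => simp
  | succ k ih => rw [pow_succ, ih, ← mul_kronecker_mul, pow_succ, pow_succ]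

def shiftMatrix (H : ℕ) [Zero R] [One R] : Matrix (Fin H) (Fin H) R :=
  of fun i j => if (i : ℕ) = j + 1 then 1 else 0

theorem shiftMatrix_pow_apply [Semiring R] (H k : ℕ) (i j : Fin H) :
    (shiftMatrix H ^ k : Matrix (Fin H) (Fin H) R) i j = if (i : ℕ) = j + k then 1 else 0 := by
  induction k generalizing j with
  | zero => simp [one_apply, Fin.ext_iff]
  | succ k ih =>
    rw [pow_succ, mul_apply]
    simp only [ih]
    simp only [shiftMatrix, of_apply, mul_ite, mul_one, mul_zero, Fin.sum_ite_val_eq]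
    split_ifs <;> first | rfl | omega

theorem shiftMatrix_pow_self [Semiring R] (H : ℕ) :
    (shiftMatrix H ^ H : Matrix (Fin H) (Fin H) R) = 0 := by
  ext i j
  rw [shiftMatrix_pow_apply, if_neg (by omega), zero_apply]

theorem conjTranspose_shiftMatrix_mul_self [Semiring R] [StarRing R] (H : ℕ) :
    (shiftMatrix H : Matrix (Fin H) (Fin H) R)ᴴ * shiftMatrix H =
      diagonal fun i : Fin H => if (i : ℕ) + 1 < H then 1 else 0 := by
  ext i j
  simp only [mul_apply, conjTranspose_apply, shiftMatrix, of_apply, apply_ite star, star_one,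
    star_zero, ite_mul, one_mul, zero_mul, Fin.sum_ite_val_eq, diagonal_apply, Fin.ext_iff]
  split_ifs <;> first | rfl | omega

def blockToeplitz [Semiring R] (H : ℕ) (F : ℕ → Matrix α β R) :
    Matrix (Fin H × α) (Fin H × β) R :=
  ∑ k ∈ Finset.range H, (shiftMatrix H ^ k) ⊗ₖ F k

theorem blockToeplitz_apply [Semiring R] (H : ℕ) (F : ℕ → Matrix α β R) (i j : Fin H) (a : α)
    (b : β) : blockToeplitz H F (i, a) (j, b) = if (j : ℕ) ≤ i then F (i - j) a b else 0 := by
  simp only [blockToeplitz, sum_apply, kronecker_apply, shiftMatrix_pow_apply, ite_mul, one_mul,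
    zero_mul]
  split_ifs with hji
  · rw [Finset.sum_eq_single_of_mem (i - j : ℕ) (Finset.mem_range.mpr (by omega))
      fun k _ hk => if_neg (by omega), if_pos (by omega)]
  · exact Finset.sum_eq_zero fun k _ => if_neg (by omega)

theorem blockToeplitz_mul_one_kronecker [CommSemiring R] [Fintype β] [DecidableEq β] (H : ℕ)
    (F : ℕ → Matrix α β R) (B : Matrix β γ R) :
    blockToeplitz H F * ((1 : Matrix (Fin H) (Fin H) R) ⊗ₖ B) = blockToeplitz H (F · * B) := by
  rw [blockToeplitz, Matrix.sum_mul]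
  exact Finset.sum_congr rfl fun k _ => by rw [← mul_kronecker_mul, Matrix.mul_one]

section L2OpNorm

variable [RCLike 𝕜] [Fintype ι] [Fintype α] [Fintype β]

theorem l2_opNorm_one_kronecker_le [DecidableEq ι] [DecidableEq β] (C : Matrix α β 𝕜) :
    ‖(1 : Matrix ι ι 𝕜) ⊗ₖ C‖ ≤ ‖C‖ := by
  rw [l2_opNorm_def]
  refine ContinuousLinearMap.opNorm_le_bound _ (norm_nonneg C) fun x => ?_
  let row : ι → EuclideanSpace 𝕜 β := fun i => WithLp.toLp 2 fun b => x (i, b)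
  have hrow : ∀ i a, ((1 ⊗ₖ C) *ᵥ WithLp.ofLp x) (i, a) = (C *ᵥ WithLp.ofLp (row i)) a := by
    intro i a
    simp [mulVec, dotProduct, Fintype.sum_prod_type, one_apply, row]
  have hsq : ‖(toEuclideanLin.trans LinearMap.toContinuousLinearMap)
      ((1 : Matrix ι ι 𝕜) ⊗ₖ C) x‖ ^ 2 ≤ (‖C‖ * ‖x‖) ^ 2 :=
    calc _ = ∑ i, ‖(EuclideanSpace.equiv α 𝕜).symm (C *ᵥ row i)‖ ^ 2 := by
          simp [EuclideanSpace.norm_sq_eq, Fintype.sum_prod_type, hrow]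
      _ ≤ ∑ i, (‖C‖ * ‖row i‖) ^ 2 := by
          gcongr with i
          exact l2_opNorm_mulVec C (row i)
      _ = (‖C‖ * ‖x‖) ^ 2 := by
          simp [mul_pow, ← Finset.mul_sum, EuclideanSpace.norm_sq_eq, Fintype.sum_prod_type, row]
  exact (pow_le_pow_iff_left₀ (norm_nonneg _) (by positivity) two_ne_zero).mp hsq

theorem l2_opNorm_mul_mul_mul_le {κ ν : Type*} [Fintype κ] [Fintype ν] [DecidableEq α]
    [DecidableEq β] [DecidableEq κ] [DecidableEq ν] (M₁ : Matrix ι α 𝕜) (M₂ : Matrix α β 𝕜)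
    (M₃ : Matrix β κ 𝕜) (M₄ : Matrix κ ν 𝕜) :
    ‖M₁ * M₂ * M₃ * M₄‖ ≤ ‖M₁‖ * ‖M₂‖ * ‖M₃‖ * ‖M₄‖ := by
  refine (l2_opNorm_mul _ _).trans ?_
  gcongr
  refine (l2_opNorm_mul _ _).trans ?_
  gcongr
  exact l2_opNorm_mul _ _

theorem l2_opNorm_le_one_of_conjTranspose_mul_self_eq_diagonal [DecidableEq β]
    {M : Matrix α β 𝕜} {v : β → 𝕜} (hM : Mᴴ * M = diagonal v) (hv : ‖v‖ ≤ 1) : ‖M‖ ≤ 1 := by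
  have h : ‖M‖ * ‖M‖ ≤ 1 := by
    rwa [← l2_opNorm_conjTranspose_mul_self, hM, l2_opNorm_diagonal]
  nlinarith [norm_nonneg M]

theorem l2_opNorm_shiftMatrix_kronecker_one_le [DecidableEq α] (H : ℕ) :
    ‖shiftMatrix H ⊗ₖ (1 : Matrix α α 𝕜)‖ ≤ 1 := by
  refine l2_opNorm_le_one_of_conjTranspose_mul_self_eq_diagonal
    (v := fun p => (if (p.1 : ℕ) + 1 < H then 1 else 0) * 1) ?_ ?_
  · rw [conjTranspose_kronecker, ← mul_kronecker_mul, conjTranspose_shiftMatrix_mul_self,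
      conjTranspose_one, Matrix.one_mul, ← diagonal_one, diagonal_kronecker_diagonal]
  · refine (pi_norm_le_iff_of_nonneg zero_le_one).mpr fun p => ?_
    split_ifs <;> simp

theorem l2_opNorm_shiftMatrix_kronecker_le [DecidableEq α] [DecidableEq β] (H : ℕ)
    (C : Matrix α β 𝕜) : ‖shiftMatrix H ⊗ₖ C‖ ≤ ‖C‖ :=
  calc ‖shiftMatrix H ⊗ₖ C‖
      = ‖(shiftMatrix H ⊗ₖ (1 : Matrix α α 𝕜)) * ((1 : Matrix (Fin H) (Fin H) 𝕜) ⊗ₖ C)‖ := by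
        rw [← mul_kronecker_mul, Matrix.mul_one, Matrix.one_mul]
    _ ≤ 1 * ‖C‖ := (l2_opNorm_mul _ _).trans <|
        mul_le_mul (l2_opNorm_shiftMatrix_kronecker_one_le H) (l2_opNorm_one_kronecker_le C)
          (norm_nonneg _) zero_le_one
    _ = ‖C‖ := one_mul _

end L2OpNorm

end Matrix

section Gw

variable {n m : ℕ} (H : ℕ)

theorem Gw_eq_blockToeplitz (A : Matrix (Fin n) (Fin n) ℝ) :
    Gw H A = blockToeplitz H (A ^ ·) := by
  ext ⟨i, a⟩ ⟨j, b⟩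
  rw [blockToeplitz_apply]
  rfl

theorem Gu_eq_Gw_mul (A : Matrix (Fin n) (Fin n) ℝ) (B : Matrix (Fin n) (Fin m) ℝ) :
    Gu H A B = Gw H A * ((1 : Matrix (Fin H) (Fin H) ℝ) ⊗ₖ B) := by
  ext ⟨i, a⟩ ⟨j, b⟩
  rw [Gw_eq_blockToeplitz, blockToeplitz_mul_one_kronecker, blockToeplitz_apply]
  rfl

theorem Gw_eq_geom_sum (A : Matrix (Fin n) (Fin n) ℝ) :
    Gw H A = ∑ k ∈ Finset.range H, (shiftMatrix H ⊗ₖ A) ^ k := by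
  simp only [Gw_eq_blockToeplitz, blockToeplitz, kronecker_pow]

theorem shiftMatrix_kronecker_pow_self (A : Matrix (Fin n) (Fin n) ℝ) :
    (shiftMatrix H ⊗ₖ A) ^ H = 0 := by
  rw [kronecker_pow, shiftMatrix_pow_self, zero_kronecker]

theorem Gw_mul_one_sub (A : Matrix (Fin n) (Fin n) ℝ) :
    Gw H A * (1 - shiftMatrix H ⊗ₖ A) = 1 := by
  rw [Gw_eq_geom_sum, geom_sum_mul_neg, shiftMatrix_kronecker_pow_self, sub_zero]

theorem one_sub_mul_Gw (A : Matrix (Fin n) (Fin n) ℝ) :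
    (1 - shiftMatrix H ⊗ₖ A) * Gw H A = 1 := by
  rw [Gw_eq_geom_sum, mul_neg_geom_sum, shiftMatrix_kronecker_pow_self, sub_zero]

theorem Gw_sub_Gw (A₁ A₂ : Matrix (Fin n) (Fin n) ℝ) :
    Gw H A₁ - Gw H A₂ = Gw H A₁ * (shiftMatrix H ⊗ₖ (A₁ - A₂)) * Gw H A₂ := by
  rw [sub_eq_mul_sub_mul_of_mul_eq_one (Gw_mul_one_sub H A₁) (one_sub_mul_Gw H A₂),
    sub_sub_sub_cancel_left, kronecker_sub]

end Gw

theorem Gu_diff_opNorm_bound_general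
    {n m : ℕ} (H : ℕ)
    (A₁ A₂ : Matrix (Fin n) (Fin n) ℝ) (B₁ B₂ : Matrix (Fin n) (Fin m) ℝ) :
    ‖Gu H A₁ B₁ - Gu H A₂ B₂‖ ≤
      ‖B₁‖ * ‖Gw H A₁‖ * ‖Gw H A₂‖ * ‖A₁ - A₂‖ + ‖Gw H A₂‖ * ‖B₁ - B₂‖ := by
  set I : Matrix (Fin H) (Fin H) ℝ := 1
  set D := shiftMatrix H ⊗ₖ (A₁ - A₂)
  have hsplit : Gu H A₁ B₁ - Gu H A₂ B₂ =
      Gw H A₁ * D * Gw H A₂ * (I ⊗ₖ B₁) + Gw H A₂ * (I ⊗ₖ (B₁ - B₂)) := by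
    rw [Gu_eq_Gw_mul, Gu_eq_Gw_mul, ← Gw_sub_Gw, kronecker_sub, Matrix.sub_mul, Matrix.mul_sub]
    abel
  calc ‖Gu H A₁ B₁ - Gu H A₂ B₂‖
      ≤ ‖Gw H A₁ * D * Gw H A₂ * (I ⊗ₖ B₁)‖ + ‖Gw H A₂ * (I ⊗ₖ (B₁ - B₂))‖ :=
        hsplit ▸ norm_add_le _ _
    _ ≤ ‖Gw H A₁‖ * ‖D‖ * ‖Gw H A₂‖ * ‖I ⊗ₖ B₁‖ + ‖Gw H A₂‖ * ‖I ⊗ₖ (B₁ - B₂)‖ :=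
        add_le_add (l2_opNorm_mul_mul_mul_le _ _ _ _) (l2_opNorm_mul _ _)
    _ ≤ ‖Gw H A₁‖ * ‖A₁ - A₂‖ * ‖Gw H A₂‖ * ‖B₁‖ + ‖Gw H A₂‖ * ‖B₁ - B₂‖ := by
        gcongr
        exacts [l2_opNorm_shiftMatrix_kronecker_le H _, l2_opNorm_one_kronecker_le _,
          l2_opNorm_one_kronecker_le _]
    _ = ‖B₁‖ * ‖Gw H A₁‖ * ‖Gw H A₂‖ * ‖A₁ - A₂‖ + ‖Gw H A₂‖ * ‖B₁ - B₂‖ := by ring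

/-- For `H ≥ 1`, `A₁, A₂ ∈ ℝ^{n×n}` and `B₁, B₂ ∈ ℝ^{n×m}`:
`‖G_u(A₁,B₁) − G_u(A₂,B₂)‖₂ ≤ ‖B₁‖₂ ‖G_w(A₁)‖₂ ‖G_w(A₂)‖₂ ‖A₁ − A₂‖₂ + ‖G_w(A₂)‖₂ ‖B₁ − B₂‖₂`. -/
theorem Gu_diff_opNorm_bound
    {n m : ℕ} (H : ℕ) (hH : 1 ≤ H)
    (A₁ A₂ : Matrix (Fin n) (Fin n) ℝ) (B₁ B₂ : Matrix (Fin n) (Fin m) ℝ) :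
    ‖Gu H A₁ B₁ - Gu H A₂ B₂‖ ≤
      ‖B₁‖ * ‖Gw H A₁‖ * ‖Gw H A₂‖ * ‖A₁ - A₂‖ + ‖Gw H A₂‖ * ‖B₁ - B₂‖ :=
  Gu_diff_opNorm_bound_general H A₁ A₂ B₁ B₂
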